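/- arXiv:2502.13275 — 5 statements merged into one kernel-verified Lean document; each statement's English description precedes it below -/
import Mathlib

section
/- There exists a constant C = C(d, l, c, M) > 0 such that for every δ > 0 and all points ξ₁, ξ₂, ξ₃, ξ₄ ∈ B_d(0,1) satisfying ξ₁ + ξ₃ = ξ₂ + ξ₄ and |q_m(ξ₁) + q_m(ξ₃) − q_m(ξ₂) − q_m(ξ₄)| ≤ δ for every m = 1, …, l, one has ‖ξ₁ − ξ₂‖ · ‖ξ₁ − ξ₄‖ ≤ C δ. In particular min(‖ξ₁ − ξ₂‖, ‖ξ₁ − ξ₄‖) ≤ C^{1/2} δ^{1/2}. -/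
/-!
Put `u = ξ₁ - ξ₂` and `v = ξ₁ - ξ₄`. Since `ξ₃ = ξ₂ + ξ₄ - ξ₁` and `A_m` is symmetric, the
second difference `q_m(ξ₁) + q_m(ξ₃) - q_m(ξ₂) - q_m(ξ₄)` equals `⟨u, A_m v⟩`, so
`|⟨A_m ν, v⟩| ≤ δ / ‖u‖` for `ν = u / ‖u‖` and every `m`. Transversality at `ν` gives a matrix `W`
whose columns are `d` of the vectors `A_m ν`, with `|det W| ≥ c` and entries at most `M`.
Cramer's rule bounds `v = (Wᵀ)⁻¹ (Wᵀ v)` coordinatewise by `O(δ / ‖u‖)`, whence `‖u‖ ‖v‖ ≲ δ`.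
-/

open Matrix

namespace Matrix

variable {n : Type*} [Fintype n] [DecidableEq n]

theorem abs_inv_apply_le {W : Matrix n n ℝ} {c K : ℝ} (hc : 0 < c) (hdet : c ≤ |W.det|)
    (hK : 1 ≤ K) (hW : ∀ i j, |W i j| ≤ K) (i j : n) :
    |W⁻¹ i j| ≤ (Fintype.card n).factorial * K ^ Fintype.card n / c := by
  -- an adjugate entry is the determinant of `W` with a row replaced by a standard basis vector,
  -- whose entries are at most `1 ≤ K`
  have hadj : |W.adjugate i j| ≤ (Fintype.card n).factorial * K ^ Fintype.card n := by
    rw [adjugate_apply]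
    refine (det_le (abv := AbsoluteValue.abs) fun i' j' => ?_).trans_eq (nsmul_eq_mul _ _)
    rw [updateRow_apply]
    split_ifs
    · rw [Pi.single_apply]; split_ifs <;> simp [hK, zero_le_one.trans hK]
    · exact hW i' j'
  rw [inv_def, smul_apply, smul_eq_mul, Ring.inverse_eq_inv', abs_mul, abs_inv, inv_mul_eq_div]
  exact div_le_div₀ (by positivity) hadj hc hdet

theorem abs_apply_le_of_abs_mulVec_le {W : Matrix n n ℝ} {c K ε : ℝ} (hc : 0 < c)
    (hdet : c ≤ |W.det|) (hK : 1 ≤ K) (hW : ∀ i j, |W i j| ≤ K) {v : n → ℝ}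
    (hv : ∀ j, |(W *ᵥ v) j| ≤ ε) (i : n) :
    |v i| ≤ Fintype.card n * ((Fintype.card n).factorial * K ^ Fintype.card n / c) * ε := by
  have hunit : IsUnit W.det := (abs_pos.mp (hc.trans_le hdet)).isUnit
  calc |v i| = |(W⁻¹ *ᵥ (W *ᵥ v)) i| := by
        rw [mulVec_mulVec, nonsing_inv_mul _ hunit, one_mulVec]
    _ ≤ ∑ j, |W⁻¹ i j| * |(W *ᵥ v) j| := by
        simpa only [mulVec, dotProduct, abs_mul] using
          Finset.abs_sum_le_sum_abs (fun j => W⁻¹ i j * (W *ᵥ v) j) Finset.univ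
    _ ≤ ∑ _j : n, (Fintype.card n).factorial * K ^ Fintype.card n / c * ε := by
        gcongr with j
        · exact abs_inv_apply_le hc hdet hK hW i j
        · exact hv j
    _ = _ := by simp [mul_assoc]

end Matrix

theorem EuclideanSpace.norm_le_sqrt_card_mul {n : Type*} [Fintype n] {x : EuclideanSpace ℝ n}
    {B : ℝ} (hB : 0 ≤ B) (hx : ∀ i, |x i| ≤ B) : ‖x‖ ≤ √(Fintype.card n) * B := by
  rw [EuclideanSpace.norm_eq, ← Real.sqrt_sq hB, ← Real.sqrt_mul (Nat.cast_nonneg _)]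
  gcongr
  calc ∑ i, ‖x i‖ ^ 2 ≤ ∑ _i : n, B ^ 2 := by
        gcongr with i
        rw [Real.norm_eq_abs]
        exact hx i
    _ = _ := by simp

noncomputable def affineQuadratic {n : Type*} [Fintype n] (A : Matrix n n ℝ) (b : n → ℝ)
    (c₀ : ℝ) (x : n → ℝ) : ℝ :=
  1 / 2 * x ⬝ᵥ A *ᵥ x + b ⬝ᵥ x + c₀

theorem Matrix.IsSymm.affineQuadratic_add_sub_eq {n : Type*} [Fintype n] {A : Matrix n n ℝ}
    (hA : A.IsSymm) (b : n → ℝ) (c₀ : ℝ) {x₁ x₂ x₃ x₄ : n → ℝ} (h : x₁ + x₃ = x₂ + x₄) :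
    affineQuadratic A b c₀ x₁ + affineQuadratic A b c₀ x₃ - affineQuadratic A b c₀ x₂
      - affineQuadratic A b c₀ x₄ = (x₁ - x₂) ⬝ᵥ A *ᵥ (x₁ - x₄) := by
  have hsymm : ∀ x y, x ⬝ᵥ A *ᵥ y = y ⬝ᵥ A *ᵥ x := fun x y => by
    rw [dotProduct_mulVec, ← mulVec_transpose, hA.eq, dotProduct_comm]
  obtain rfl : x₃ = x₂ + x₄ - x₁ := by rw [← h]; abel
  simp only [affineQuadratic, mulVec_add, mulVec_sub, dotProduct_add, dotProduct_sub,
    add_dotProduct, sub_dotProduct]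
  rw [hsymm x₁ x₂, hsymm x₁ x₄, hsymm x₂ x₄]
  ring

theorem min_le_sqrt_mul_sqrt_of_mul_le {a b C δ : ℝ} (ha : 0 ≤ a) (hb : 0 ≤ b) (hC : 0 ≤ C)
    (h : a * b ≤ C * δ) : min a b ≤ √C * √δ := by
  rw [← Real.sqrt_mul hC]
  refine Real.le_sqrt_of_sq_le ?_
  rw [sq]
  exact (mul_le_mul (min_le_left a b) (min_le_right a b) (le_min ha hb) ha).trans h

theorem norm_mul_norm_le_of_transversal {ι n : Type*} [Fintype n] [DecidableEq n]
    {A : ι → Matrix n n ℝ} (hA : ∀ m, (A m).IsSymm) {c K : ℝ} (hc : 0 < c) (hK : 1 ≤ K)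
    (hbound : ∀ m (ν : EuclideanSpace ℝ n), ‖ν‖ = 1 → ∀ i, |(A m *ᵥ ν) i| ≤ K)
    (htrans : ∀ ν : EuclideanSpace ℝ n, ‖ν‖ = 1 →
      ∃ idx : n → ι, c ≤ |(of fun i j => (A (idx j) *ᵥ ν) i).det|)
    {u v : EuclideanSpace ℝ n} {δ : ℝ} (hδ : 0 ≤ δ) (huv : ∀ m, |u ⬝ᵥ A m *ᵥ v| ≤ δ) :
    ‖u‖ * ‖v‖ ≤
      √(Fintype.card n) * (Fintype.card n * ((Fintype.card n).factorial * K ^ Fintype.card n / c))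
        * δ := by
  rcases eq_or_ne u 0 with rfl | hu
  · rw [norm_zero, zero_mul]; positivity
  have hu₀ : 0 < ‖u‖ := norm_pos_iff.mpr hu
  set ν := ‖u‖⁻¹ • u
  have hν : ‖ν‖ = 1 := norm_smul_inv_norm hu
  obtain ⟨idx, hdet⟩ := htrans ν hν
  set W : Matrix n n ℝ := of fun i j => (A (idx j) *ᵥ ν) i
  have hWv : ∀ j, |(Wᵀ *ᵥ v) j| ≤ δ / ‖u‖ := fun j => by
    have : (Wᵀ *ᵥ v) j = ‖u‖⁻¹ * (u ⬝ᵥ A (idx j) *ᵥ v) := by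
      change (A (idx j) *ᵥ ν) ⬝ᵥ v = _
      rw [dotProduct_comm, dotProduct_mulVec, ← mulVec_transpose, (hA _).eq, dotProduct_comm]
      simp [ν, smul_dotProduct]
    rw [this, abs_mul, abs_inv, abs_norm, inv_mul_eq_div]
    exact div_le_div_of_nonneg_right (huv _) hu₀.le
  have hv := EuclideanSpace.norm_le_sqrt_card_mul (by positivity)
    (abs_apply_le_of_abs_mulVec_le (W := Wᵀ) hc (by rwa [det_transpose]) hK
      (fun i j => hbound (idx i) ν hν j) hWv)
  calc ‖u‖ * ‖v‖ ≤ ‖u‖ * (√(Fintype.card n) * (Fintype.card n *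
        ((Fintype.card n).factorial * K ^ Fintype.card n / c) * (δ / ‖u‖))) := by gcongr
    _ = _ := by field_simp

theorem biorthogonality_quadratic_manifold_general
    (d l : ℕ) (hd : 1 ≤ d)
    (A : Fin l → Matrix (Fin d) (Fin d) ℝ) (hsymm : ∀ m, (A m).IsSymm)
    (b : Fin l → EuclideanSpace ℝ (Fin d)) (c0 : Fin l → ℝ)
    (M c : ℝ) (hc : 0 < c)
    (hM : ∀ (m : Fin l) (v : EuclideanSpace ℝ (Fin d)),
      ‖(show EuclideanSpace ℝ (Fin d) from WithLp.toLp 2 ((A m).mulVec v))‖ ≤ M * ‖v‖)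
    (htrans : ∀ ν : EuclideanSpace ℝ (Fin d), ‖ν‖ = 1 →
      ∃ idx : Fin d → Fin l,
        c ≤ |Matrix.det (Matrix.of fun i j => ((A (idx j)).mulVec ν) i)|)
    (q : Fin l → EuclideanSpace ℝ (Fin d) → ℝ)
    (hq : ∀ (m : Fin l) (ξ : EuclideanSpace ℝ (Fin d)),
      q m ξ = (1/2) * dotProduct (ξ : Fin d → ℝ) ((A m).mulVec ξ)
        + dotProduct (b m : Fin d → ℝ) ξ + c0 m) :
    ∃ C : ℝ, 0 < C ∧ ∀ δ : ℝ, 0 < δ →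
      ∀ ξ₁ ξ₂ ξ₃ ξ₄ : EuclideanSpace ℝ (Fin d),
        ‖ξ₁‖ < 1 → ‖ξ₂‖ < 1 → ‖ξ₃‖ < 1 → ‖ξ₄‖ < 1 →
        ξ₁ + ξ₃ = ξ₂ + ξ₄ →
        (∀ m : Fin l, |q m ξ₁ + q m ξ₃ - q m ξ₂ - q m ξ₄| ≤ δ) →
        ‖ξ₁ - ξ₂‖ * ‖ξ₁ - ξ₄‖ ≤ C * δ ∧
        min ‖ξ₁ - ξ₂‖ ‖ξ₁ - ξ₄‖ ≤ Real.sqrt C * Real.sqrt δ := by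
  set K := max M 1
  have hbound : ∀ m (ν : EuclideanSpace ℝ (Fin d)), ‖ν‖ = 1 → ∀ i, |(A m *ᵥ ν) i| ≤ K :=
    fun m ν hν i => calc
      |(A m *ᵥ ν) i| ≤ ‖WithLp.toLp 2 (A m *ᵥ ν)‖ :=
        PiLp.norm_apply_le (WithLp.toLp 2 (A m *ᵥ ν)) i
      _ ≤ M := by simpa [hν] using hM m ν
      _ ≤ K := le_max_left M 1
  have hd₀ : (0 : ℝ) < d := by exact_mod_cast hd
  have hC : 0 < √d * (d * (d.factorial * K ^ d / c)) := by positivity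
  refine ⟨_, hC, fun δ hδ ξ₁ ξ₂ ξ₃ ξ₄ _ _ _ _ hsum hδq => ?_⟩
  have hsum' : (ξ₁ : Fin d → ℝ) + ξ₃ = ξ₂ + ξ₄ := by
    simpa only [WithLp.ofLp_add] using congrArg WithLp.ofLp hsum
  have huv : ∀ m, |(ξ₁ - ξ₂) ⬝ᵥ A m *ᵥ (ξ₁ - ξ₄)| ≤ δ := fun m => by
    have hqm : ∀ ξ, q m ξ = affineQuadratic (A m) (b m) (c0 m) ξ := hq m
    simpa only [hqm, (hsymm m).affineQuadratic_add_sub_eq (b m) (c0 m) hsum',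
      WithLp.ofLp_sub] using hδq m
  have hmain := norm_mul_norm_le_of_transversal hsymm hc (le_max_right M 1) hbound htrans
    hδ.le huv
  simp only [Fintype.card_fin] at hmain
  exact ⟨hmain, min_le_sqrt_mul_sqrt_of_mul_le (norm_nonneg _) (norm_nonneg _) hC.le hmain⟩

/-- **Biorthogonality for quadratic manifolds.** Under the transversality condition for
the symmetric generators `A₁, …, A_l` (operator norms at most `M`), there is
`C = C(d, l, c, M) > 0` such that for all `δ > 0` and `ξ₁, ξ₂, ξ₃, ξ₄ ∈ B_d(0,1)` with
`ξ₁ + ξ₃ = ξ₂ + ξ₄` and `|q_m(ξ₁) + q_m(ξ₃) − q_m(ξ₂) − q_m(ξ₄)| ≤ δ` for all `m`,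
one has `‖ξ₁ − ξ₂‖·‖ξ₁ − ξ₄‖ ≤ Cδ`; in particular
`min(‖ξ₁ − ξ₂‖, ‖ξ₁ − ξ₄‖) ≤ C^{1/2} δ^{1/2}`. -/
theorem biorthogonality_quadratic_manifold
    (d l : ℕ) (hd : 1 ≤ d) (hl : 1 ≤ l)
    (A : Fin l → Matrix (Fin d) (Fin d) ℝ) (hsymm : ∀ m, (A m).IsSymm)
    (b : Fin l → EuclideanSpace ℝ (Fin d)) (c0 : Fin l → ℝ)
    (M c : ℝ) (hc : 0 < c)
    (hM : ∀ (m : Fin l) (v : EuclideanSpace ℝ (Fin d)),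
      ‖(show EuclideanSpace ℝ (Fin d) from WithLp.toLp 2 ((A m).mulVec v))‖ ≤ M * ‖v‖)
    (htrans : ∀ ν : EuclideanSpace ℝ (Fin d), ‖ν‖ = 1 →
      ∃ idx : Fin d → Fin l,
        c ≤ |Matrix.det (Matrix.of fun i j => ((A (idx j)).mulVec ν) i)|)
    (q : Fin l → EuclideanSpace ℝ (Fin d) → ℝ)
    (hq : ∀ (m : Fin l) (ξ : EuclideanSpace ℝ (Fin d)),
      q m ξ = (1/2) * dotProduct (ξ : Fin d → ℝ) ((A m).mulVec ξ)
        + dotProduct (b m : Fin d → ℝ) ξ + c0 m) :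
    ∃ C : ℝ, 0 < C ∧ ∀ δ : ℝ, 0 < δ →
      ∀ ξ₁ ξ₂ ξ₃ ξ₄ : EuclideanSpace ℝ (Fin d),
        ‖ξ₁‖ < 1 → ‖ξ₂‖ < 1 → ‖ξ₃‖ < 1 → ‖ξ₄‖ < 1 →
        ξ₁ + ξ₃ = ξ₂ + ξ₄ →
        (∀ m : Fin l, |q m ξ₁ + q m ξ₃ - q m ξ₂ - q m ξ₄| ≤ δ) →
        ‖ξ₁ - ξ₂‖ * ‖ξ₁ - ξ₄‖ ≤ C * δ ∧
        min ‖ξ₁ - ξ₂‖ ‖ξ₁ - ξ₄‖ ≤ Real.sqrt C * Real.sqrt δ :=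
  biorthogonality_quadratic_manifold_general d l hd A hsymm b c0 M c hc hM htrans q hq
end

section
/- Let A₁, …, A_l ∈ Sym(ℝ^d) be symmetric matrices with operator norms ‖A_m‖ ≤ M, satisfying the transversality condition with constant c > 0. Then for all vectors v, w ∈ ℝ^d one has ‖v‖ · ‖w‖ ≤ (d M^{d−1} / c) · max_{1 ≤ m ≤ l} |⟨w, A_m v⟩|. -/
/-!
Normalise `v` and `w` to unit vectors `ν` and `e`, and let `b_j = A_{i_j} ν` be the columns
given by transversality at `ν`. Cramer's rule, paired with `e`, expands
`det (b_1, …, b_d) = ∑ j ⟨e, b_j⟩ · det (b_1, …, e, …, b_d)` (with `e` in the `j`-th column),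
and Hadamard's inequality bounds each determinant on the right by `M ^ (d - 1)`.
Since `⟨e, b_j⟩ = ⟨w, A_{i_j} v⟩ / (‖v‖ ‖w‖)`, this gives
`c ≤ d M ^ (d - 1) max_m |⟨w, A_m v⟩| / (‖v‖ ‖w‖)`.
-/

open Matrix Finset Function

theorem OrthonormalBasis.abs_det_le_prod_norm {E : Type*} [NormedAddCommGroup E]
    [InnerProductSpace ℝ E] {n : ℕ} (b : OrthonormalBasis (Fin n) ℝ E) (v : Fin n → E) :
    |b.toBasis.det v| ≤ ∏ i, ‖v i‖ := by
  have : Fact (Module.finrank ℝ E = n) :=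
    ⟨by simpa using Module.finrank_eq_card_basis b.toBasis⟩
  rw [← b.toBasis.orientation.volumeForm_robust' b]
  exact b.toBasis.orientation.abs_volumeForm_apply_le v

namespace Matrix

theorem det_mul_dotProduct_self_eq_sum {R n : Type*} [CommRing R] [Fintype n] [DecidableEq n]
    (B : Matrix n n R) (e : n → R) :
    (e ⬝ᵥ e) * B.det = ∑ j, (e ⬝ᵥ fun i => B i j) * (B.updateCol j e).det := by
  have h := congrArg (e ⬝ᵥ ·) (mulVec_cramer B e)
  simp only [dotProduct_smul, smul_eq_mul, dotProduct_mulVec] at h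
  rw [mul_comm, ← h]
  simp only [dotProduct, cramer_apply, vecMul]

variable {n : ℕ}

theorem abs_det_of_cols_le_prod_norm (b : Fin n → EuclideanSpace ℝ (Fin n)) :
    |(of fun i k => b k i).det| ≤ ∏ j, ‖b j‖ :=
  (EuclideanSpace.basisFun (Fin n) ℝ).abs_det_le_prod_norm b

theorem abs_det_of_cols_le_norm_mul_pow {M : ℝ} (b : Fin n → EuclideanSpace ℝ (Fin n))
    (j : Fin n) (hb : ∀ k ≠ j, ‖b k‖ ≤ M) :
    |(of fun i k => b k i).det| ≤ ‖b j‖ * M ^ (n - 1) := by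
  refine (abs_det_of_cols_le_prod_norm b).trans ?_
  rw [← mul_prod_erase univ _ (mem_univ j)]
  gcongr
  calc ∏ k ∈ univ.erase j, ‖b k‖ ≤ ∏ _k ∈ univ.erase j, M :=
        prod_le_prod (fun k _ => norm_nonneg _) fun k hk => hb k (ne_of_mem_erase hk)
    _ = M ^ (n - 1) := by simp [card_erase_of_mem]

theorem abs_det_of_cols_le_of_abs_dotProduct_le {M s : ℝ}
    (b : Fin n → EuclideanSpace ℝ (Fin n)) (e : EuclideanSpace ℝ (Fin n)) (he : ‖e‖ = 1)
    (hb : ∀ j, ‖b j‖ ≤ M) (hs : ∀ j, |(e : Fin n → ℝ) ⬝ᵥ b j| ≤ s) :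
    |(of fun i k => b k i).det| ≤ n * M ^ (n - 1) * s := by
  have hee : (e : Fin n → ℝ) ⬝ᵥ e = 1 := by
    have h := real_inner_self_eq_norm_sq e
    rwa [he, one_pow] at h
  have hcol : ∀ j, (of fun i k => b k i).updateCol j e = of fun i k => update b j e k i := by
    intro j
    ext i k
    simp only [updateCol_apply, of_apply, update_apply]
    split_ifs <;> rfl
  calc |(of fun i k => b k i).det|
      = |∑ j, ((e : Fin n → ℝ) ⬝ᵥ b j) * (of fun i k => update b j e k i).det| := by
        rw [← one_mul (of fun i k => b k i).det, ← hee, det_mul_dotProduct_self_eq_sum]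
        simp only [hcol]; rfl
    _ ≤ ∑ j, |(e : Fin n → ℝ) ⬝ᵥ b j| * |(of fun i k => update b j e k i).det| := by
        simpa only [abs_mul] using abs_sum_le_sum_abs (fun j => ((e : Fin n → ℝ) ⬝ᵥ b j) *
          (of fun i k => update b j e k i).det) univ
    _ ≤ ∑ _j : Fin n, s * M ^ (n - 1) := by
        gcongr with j
        · exact (abs_nonneg _).trans (hs j)
        · exact hs j
        · have := abs_det_of_cols_le_norm_mul_pow (update b j e) j fun k hk => by
            simpa [update_of_ne hk] using hb k
          rwa [update_self, he, one_mul] at this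
    _ = n * M ^ (n - 1) * s := by
        rw [sum_const, card_univ, Fintype.card_fin, nsmul_eq_mul, mul_comm s, mul_assoc]

end Matrix

def TransversalWith {d l : ℕ} (A : Fin l → Matrix (Fin d) (Fin d) ℝ) (c : ℝ) : Prop :=
  ∀ ν : EuclideanSpace ℝ (Fin d), ‖ν‖ = 1 →
    ∃ idx : Fin d → Fin l, c ≤ |(of fun i j => (A (idx j) *ᵥ ν) i).det|

theorem TransversalWith.mul_norm_mul_norm_le {d l : ℕ} {A : Fin l → Matrix (Fin d) (Fin d) ℝ}
    {M c s : ℝ} (hA : TransversalWith A c)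
    (hM : ∀ k (v : EuclideanSpace ℝ (Fin d)), ‖WithLp.toLp 2 (A k *ᵥ v)‖ ≤ M * ‖v‖)
    {v w : EuclideanSpace ℝ (Fin d)} (hv : v ≠ 0) (hw : w ≠ 0)
    (hs : ∀ k, |(w : Fin d → ℝ) ⬝ᵥ A k *ᵥ v| ≤ s) :
    ‖v‖ * ‖w‖ * c ≤ d * M ^ (d - 1) * s := by
  set ν : EuclideanSpace ℝ (Fin d) := ‖v‖⁻¹ • v
  set e : EuclideanSpace ℝ (Fin d) := ‖w‖⁻¹ • w
  have hν : ‖ν‖ = 1 := norm_smul_inv_norm hv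
  have hpair : ∀ k,
      (e : Fin d → ℝ) ⬝ᵥ A k *ᵥ ν = (‖v‖ * ‖w‖)⁻¹ * (w : Fin d → ℝ) ⬝ᵥ A k *ᵥ v := by
    intro k
    simp only [ν, e, WithLp.ofLp_smul, mulVec_smul, smul_dotProduct, dotProduct_smul, smul_eq_mul]
    ring
  obtain ⟨idx, hidx⟩ := hA ν hν
  have key := abs_det_of_cols_le_of_abs_dotProduct_le (s := (‖v‖ * ‖w‖)⁻¹ * s)
    (fun j => WithLp.toLp 2 (A (idx j) *ᵥ ν)) e (norm_smul_inv_norm hw)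
    (fun j => (hM (idx j) ν).trans_eq (by rw [hν, mul_one])) fun j => by
      rw [WithLp.ofLp_toLp, hpair, abs_mul, abs_of_pos (by positivity)]
      gcongr
      exact hs _
  calc ‖v‖ * ‖w‖ * c
      ≤ ‖v‖ * ‖w‖ * (d * M ^ (d - 1) * ((‖v‖ * ‖w‖)⁻¹ * s)) := by gcongr; exact hidx.trans key
    _ = d * M ^ (d - 1) * s := by field_simp

theorem transversality_bilinear_lower_bound_general
    (d l : ℕ) (hd : 1 ≤ d) (hl : 1 ≤ l)
    (A : Fin l → Matrix (Fin d) (Fin d) ℝ)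
    (M c : ℝ) (hc : 0 < c)
    (hM : ∀ (k : Fin l) (v : EuclideanSpace ℝ (Fin d)),
      ‖(show EuclideanSpace ℝ (Fin d) from WithLp.toLp 2 ((A k).mulVec v))‖ ≤ M * ‖v‖)
    (htrans : ∀ ν : EuclideanSpace ℝ (Fin d), ‖ν‖ = 1 →
      ∃ idx : Fin d → Fin l,
        c ≤ |Matrix.det (Matrix.of fun i j => ((A (idx j)).mulVec ν) i)|)
    (v w : EuclideanSpace ℝ (Fin d)) :
    ‖v‖ * ‖w‖ ≤ (d * M ^ (d - 1) / c) *
      ⨆ m : Fin l, |dotProduct (w : Fin d → ℝ) ((A m).mulVec v)| := by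
  set S := ⨆ m : Fin l, |dotProduct (w : Fin d → ℝ) ((A m).mulVec v)|
  have hM0 : 0 ≤ M := by
    simpa using (norm_nonneg _).trans (hM ⟨0, hl⟩ (EuclideanSpace.single ⟨0, hd⟩ 1))
  have hrhs : 0 ≤ d * M ^ (d - 1) * S :=
    mul_nonneg (by positivity) (Real.iSup_nonneg fun _ => abs_nonneg _)
  rw [div_mul_eq_mul_div, le_div_iff₀ hc]
  rcases eq_or_ne v 0 with rfl | hv
  · simpa using hrhs
  rcases eq_or_ne w 0 with rfl | hw
  · simpa using hrhs
  exact TransversalWith.mul_norm_mul_norm_le htrans hM hv hw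
    (le_ciSup (Finite.bddAbove_range _))

/-- **Quantitative biorthogonality bound.** If the symmetric matrices `A₁, …, A_l`
(of operator norm at most `M`) satisfy the transversality condition with constant
`c > 0`, then for all `v, w ∈ ℝ^d`:
`‖v‖ · ‖w‖ ≤ (d M^(d−1) / c) · max_{1 ≤ m ≤ l} |⟨w, A_m v⟩|`. -/
theorem transversality_bilinear_lower_bound
    (d l : ℕ) (hd : 1 ≤ d) (hl : 1 ≤ l)
    (A : Fin l → Matrix (Fin d) (Fin d) ℝ) (hsymm : ∀ k, (A k).IsSymm)
    (M c : ℝ) (hc : 0 < c)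
    (hM : ∀ (k : Fin l) (v : EuclideanSpace ℝ (Fin d)),
      ‖(show EuclideanSpace ℝ (Fin d) from WithLp.toLp 2 ((A k).mulVec v))‖ ≤ M * ‖v‖)
    (htrans : ∀ ν : EuclideanSpace ℝ (Fin d), ‖ν‖ = 1 →
      ∃ idx : Fin d → Fin l,
        c ≤ |Matrix.det (Matrix.of fun i j => ((A (idx j)).mulVec ν) i)|)
    (v w : EuclideanSpace ℝ (Fin d)) :
    ‖v‖ * ‖w‖ ≤ (d * M ^ (d - 1) / c) *
      ⨆ m : Fin l, |dotProduct (w : Fin d → ℝ) ((A m).mulVec v)| :=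
  transversality_bilinear_lower_bound_general d l hd hl A M c hc hM htrans v w
end

section
/- For any three symmetric matrices A₁, A₂, A₃ ∈ Sym(ℝ³) there exists a unit vector ν ∈ S² such that det(A₁ν, A₂ν, A₃ν) = 0. Consequently, no triple of symmetric 3×3 matrices can satisfy the transversality condition in dimension d = 3. -/
/-!
The map `ν ↦ det(A₁ν, A₂ν, A₃ν)` is continuous and, since the dimension `3` is odd, odd:
its value at `-ν` is the determinant of the negated matrix, i.e. `(-1)³` times its value at `ν`.
The unit sphere in `ℝ³` is connected and stable under `ν ↦ -ν`, so the intermediate value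
theorem gives a zero on it. At such a `ν` every choice of three of the matrices gives a zero
determinant (a permutation of the columns, or a repeated column), so no `c > 0` bounds them from below.
-/

open Matrix Metric

theorem exists_norm_eq_one_map_eq_zero_of_odd {E : Type*} [NormedAddCommGroup E] [NormedSpace ℝ E]
    (hE : 1 < Module.rank ℝ E) {f : E → ℝ} (hf : Continuous f) (hodd : ∀ x, f (-x) = -f x) :
    ∃ x, ‖x‖ = 1 ∧ f x = 0 := by
  have hconn := isConnected_sphere hE (0 : E) zero_le_one
  obtain ⟨x, hx⟩ := hconn.nonempty
  have neg_mem {y : E} (hy : y ∈ sphere 0 1) : -y ∈ sphere 0 1 := by simpa using hy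
  obtain ⟨a, ha, hfa⟩ : ∃ a ∈ sphere (0 : E) 1, f a ≤ 0 := by
    rcases le_total (f x) 0 with h | h
    · exact ⟨x, hx, h⟩
    · exact ⟨-x, neg_mem hx, by rw [hodd]; linarith⟩
  obtain ⟨y, hy, hfy⟩ := hconn.isPreconnected.intermediate_value
    ha (neg_mem ha) hf.continuousOn ⟨hfa, by rw [hodd]; linarith⟩
  exact ⟨y, mem_sphere_zero_iff_norm.mp hy, hfy⟩

namespace Matrix

variable {n R : Type*} [Fintype n] [DecidableEq n] [CommRing R]

theorem det_of_mulVec_neg (hn : Odd (Fintype.card n)) (A : n → Matrix n n R) (v : n → R) :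
    det (of fun i j => (A j *ᵥ -v) i) = -det (of fun i j => (A j *ᵥ v) i) := by
  have hneg : (of fun i j => (A j *ᵥ -v) i) = -of fun i j => (A j *ᵥ v) i := by
    ext i j
    simp [mulVec_neg]
  rw [hneg, det_neg, hn.neg_one_pow, neg_one_mul]

theorem continuous_det_of_mulVec [TopologicalSpace R] [IsTopologicalRing R] (A : n → Matrix n n R) :
    Continuous fun v : n → R => det (of fun i j => (A j *ᵥ v) i) :=
  Continuous.matrix_det <| continuous_matrix fun i _ =>
    (continuous_apply i).comp (continuous_const.matrix_mulVec continuous_id)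

theorem det_submatrix_id_eq_zero {M : Matrix n n R} (hM : M.det = 0) (e : n → n) :
    (M.submatrix id e).det = 0 := by
  by_cases he : Function.Injective e
  · simpa [hM] using det_permute' (.ofBijective e (Finite.injective_iff_bijective.mp he)) M
  · obtain ⟨j, j', hjj', hne⟩ : ∃ j j', e j = e j' ∧ j ≠ j' := by
      simpa [Function.Injective] using he
    exact det_zero_of_column_eq hne fun k => by simp [hjj']

end Matrix

theorem exists_norm_eq_one_det_of_mulVec_eq_zero {n : Type*} [Fintype n] [DecidableEq n]
    (hn : Odd (Fintype.card n)) (hn_one : 1 < Fintype.card n) (A : n → Matrix n n ℝ) :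
    ∃ ν : EuclideanSpace ℝ n, ‖ν‖ = 1 ∧ det (of fun i j => (A j *ᵥ ν) i) = 0 :=
  exists_norm_eq_one_map_eq_zero_of_odd
    (by rwa [← Module.finrank_eq_rank, finrank_euclideanSpace, Nat.one_lt_cast])
    ((continuous_det_of_mulVec A).comp (PiLp.continuous_ofLp 2 _))
    fun ν => det_of_mulVec_neg hn A ν

theorem no_transversality_three_symmetric_matrices_general
    (A₁ A₂ A₃ : Matrix (Fin 3) (Fin 3) ℝ) :
    (∃ ν : EuclideanSpace ℝ (Fin 3), ‖ν‖ = 1 ∧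
      Matrix.det (Matrix.of fun i j => ((![A₁, A₂, A₃] j).mulVec ν) i) = 0) ∧
    ¬ ∃ c : ℝ, 0 < c ∧ ∀ ν : EuclideanSpace ℝ (Fin 3), ‖ν‖ = 1 →
        ∃ idx : Fin 3 → Fin 3,
          c ≤ |Matrix.det (Matrix.of fun i j => ((![A₁, A₂, A₃] (idx j)).mulVec ν) i)| := by
  obtain ⟨ν, hν, hdet⟩ :=
    exists_norm_eq_one_det_of_mulVec_eq_zero (by decide) (by decide) ![A₁, A₂, A₃]
  refine ⟨⟨ν, hν, hdet⟩, fun ⟨c, hc, hbound⟩ => ?_⟩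
  obtain ⟨idx, hidx⟩ := hbound ν hν
  rw [show (of fun i j => (![A₁, A₂, A₃] (idx j) *ᵥ ν) i) =
    (of fun i j => (![A₁, A₂, A₃] j *ᵥ ν) i).submatrix id idx from rfl,
    det_submatrix_id_eq_zero hdet, abs_zero] at hidx
  exact hc.not_ge hidx

/-- For any three symmetric matrices `A₁, A₂, A₃ ∈ Sym(ℝ³)` there is a unit vector
`ν ∈ S²` with `det(A₁ν, A₂ν, A₃ν) = 0`. Consequently no triple of symmetric `3×3`
matrices satisfies the transversality condition in dimension `d = 3`. -/
theorem no_transversality_three_symmetric_matrices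
    (A₁ A₂ A₃ : Matrix (Fin 3) (Fin 3) ℝ)
    (h₁ : A₁.IsSymm) (h₂ : A₂.IsSymm) (h₃ : A₃.IsSymm) :
    (∃ ν : EuclideanSpace ℝ (Fin 3), ‖ν‖ = 1 ∧
      Matrix.det (Matrix.of fun i j => ((![A₁, A₂, A₃] j).mulVec ν) i) = 0) ∧
    ¬ ∃ c : ℝ, 0 < c ∧ ∀ ν : EuclideanSpace ℝ (Fin 3), ‖ν‖ = 1 →
        ∃ idx : Fin 3 → Fin 3,
          c ≤ |Matrix.det (Matrix.of fun i j => ((![A₁, A₂, A₃] (idx j)).mulVec ν) i)| :=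
  no_transversality_three_symmetric_matrices_general A₁ A₂ A₃
end

section
/- Let d ≥ 1. Consider the family ℱ of symmetric d×d matrices consisting of the identity I_d, the transposition matrices A^{(ij)} for 1 ≤ i < j ≤ d (where A^{(ij)}v swaps the i-th and j-th coordinates of v and fixes the others), and the sign-flip matrices A^{(i)} for 1 ≤ i ≤ d (where A^{(i)}v negates the i-th coordinate of v and fixes the others). Then there exists c > 0 (depending only on d) such that for every unit vector ν ∈ S^{d−1} there exist matrices B₁, …, B_d ∈ ℱ with |det(B₁ν, …, B_dν)| ≥ c. That is, the family ℱ satisfies the transversality condition. -/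
/-- The transposition matrix `A^{(ij)}`: `(A^{(ij)} v)_k = v_j` for `k = i`,
`v_i` for `k = j`, and `v_k` otherwise. -/
def swapMat (d : ℕ) (i j : Fin d) : Matrix (Fin d) (Fin d) ℝ :=
  Matrix.of fun a b =>
    if a = i then (if b = j then 1 else 0)
    else if a = j then (if b = i then 1 else 0)
    else if b = a then 1 else 0

/-- The sign-flip matrix `A^{(i)}`: `(A^{(i)} v)_k = −v_k` for `k = i` and
`v_k` otherwise. -/
def signMat (d : ℕ) (i : Fin d) : Matrix (Fin d) (Fin d) ℝ :=
  Matrix.diagonal fun k => if k = i then -1 else 1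

/-
The admissible tuples `B` form a finite set and each `ν ↦ det(B₁ν, …, B_dν)` is continuous, so by
compactness of the sphere it suffices to find, for every unit `ν`, one tuple with nonzero
determinant. Pick `i₀` with `ν i₀ ≠ 0` and take the identity in column `i₀`, the sign flip
`A^{(m)}` where `ν m ≠ 0` and the transposition `A^{(i₀ m)}` where `ν m = 0`. Since
`⟪v, A^{(m)}ν⟫ = ⟪v, ν⟫ - 2 v_m ν_m` and `⟪v, A^{(i₀ m)}ν⟫ = ⟪v, ν⟫ - (v_{i₀} - v_m)(ν_{i₀} - ν_m)`,
a vector `v` orthogonal to all columns has `v_m ν_m = 0` for `m ≠ i₀` and `v_m = v_{i₀}` where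
`ν m = 0`; hence `v_{i₀} ν_{i₀} = ⟪v, ν⟫ = 0`, and `v = 0`.
-/

open Matrix

theorem IsCompact.exists_pos_forall_exists_le_norm {X ι E : Type*} [TopologicalSpace X]
    [NormedAddCommGroup E] {K : Set X} (hK : IsCompact K) (S : Finset ι) (f : ι → X → E)
    (hf : ∀ i ∈ S, Continuous (f i)) (hne : ∀ x ∈ K, ∃ i ∈ S, f i x ≠ 0) :
    ∃ c : ℝ, 0 < c ∧ ∀ x ∈ K, ∃ i ∈ S, c ≤ ‖f i x‖ := by
  obtain ⟨c, hc, hcK⟩ := hK.exists_forall_le' (f := fun x => S.sup fun i => ‖f i x‖₊)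
    (Continuous.finset_sup_apply fun i hi => (hf i hi).nnnorm).continuousOn
    (a := 0) fun x hx => by
      obtain ⟨i, hi, hfi⟩ := hne x hx
      exact Finset.lt_sup_iff.mpr ⟨i, hi, nnnorm_pos.mpr hfi⟩
  refine ⟨c, hc, fun x hx => ?_⟩
  obtain ⟨i, hi, hci⟩ := (Finset.le_sup_iff hc).mp (hcK x hx)
  exact ⟨i, hi, hci⟩

section

variable {d : ℕ}

lemma signMat_mulVec (i : Fin d) (ν : Fin d → ℝ) :
    signMat d i *ᵥ ν = ν - (2 * ν i) • Pi.single i 1 := by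
  ext a
  by_cases ha : a = i
  · subst ha; simp [signMat, mulVec_diagonal]; ring
  · simp [signMat, mulVec_diagonal, ha]

lemma swapMat_mulVec (i j : Fin d) (ν : Fin d → ℝ) :
    swapMat d i j *ᵥ ν = ν - (ν i - ν j) • (Pi.single i 1 - Pi.single j 1) := by
  ext a
  simp only [mulVec, dotProduct, swapMat, of_apply]
  by_cases hai : a = i
  · subst hai; by_cases hij : a = j <;> simp [hij]
  · by_cases haj : a = j
    · subst haj; simp [hai]
    · simp [hai, haj]

noncomputable def transversalChoice (ν : Fin d → ℝ) (i₀ m : Fin d) : Matrix (Fin d) (Fin d) ℝ :=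
  if m = i₀ then 1 else if ν m = 0 then swapMat d i₀ m else signMat d m

lemma det_transversalChoice_ne_zero {ν : Fin d → ℝ} {i₀ : Fin d} (hν : ν i₀ ≠ 0) :
    (of fun a m => (transversalChoice ν i₀ m *ᵥ ν) a).det ≠ 0 := by
  rw [Ne, ← exists_vecMul_eq_zero_iff]
  rintro ⟨v, hv0, hv⟩
  have hcol (m : Fin d) : v ⬝ᵥ (transversalChoice ν i₀ m *ᵥ ν) = 0 := congrFun hv m
  have hvν : v ⬝ᵥ ν = 0 := by simpa [transversalChoice] using hcol i₀
  have hflip (m : Fin d) (hm : m ≠ i₀) : v m * ν m = 0 := by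
    by_cases hνm : ν m = 0
    · simp [hνm]
    · have := hcol m
      rw [transversalChoice, if_neg hm, if_neg hνm, signMat_mulVec] at this
      simp only [dotProduct_sub, dotProduct_smul, dotProduct_single, hvν] at this
      simpa [hνm] using this
  have hswap (m : Fin d) (hm : m ≠ i₀) (hνm : ν m = 0) : v m = v i₀ := by
    have := hcol m
    rw [transversalChoice, if_neg hm, if_pos hνm, swapMat_mulVec] at this
    simp only [dotProduct_sub, dotProduct_smul, dotProduct_single, hvν, hνm, mul_one, sub_zero,
      zero_sub, neg_eq_zero, smul_eq_mul, mul_eq_zero, hν, false_or, sub_eq_zero] at this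
    exact this.symm
  have hvi₀ : v i₀ = 0 := by
    have : v ⬝ᵥ ν = v i₀ * ν i₀ :=
      Finset.sum_eq_single i₀ (fun m _ hm => hflip m hm) (by simp)
    simpa [hν] using this.symm.trans hvν
  apply hv0
  funext m
  by_cases hm : m = i₀
  · rw [hm, hvi₀]; rfl
  by_cases hνm : ν m = 0
  · rw [hswap m hm hνm, hvi₀]; rfl
  · simpa [hνm] using hflip m hm
end

def swapSignFamily (d : ℕ) : Set (Matrix (Fin d) (Fin d) ℝ) :=
  {B | B = 1 ∨ (∃ i j : Fin d, i ≠ j ∧ B = swapMat d i j) ∨ ∃ i : Fin d, B = signMat d i}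

lemma swapSignFamily_finite (d : ℕ) : (swapSignFamily d).Finite := by
  refine (((Set.finite_range fun p : Fin d × Fin d => swapMat d p.1 p.2).union
    (Set.finite_range (signMat d))).insert 1).subset ?_
  rintro B (rfl | ⟨i, j, -, rfl⟩ | ⟨i, rfl⟩)
  · exact Set.mem_insert _ _
  · exact Set.mem_insert_of_mem _ (Or.inl ⟨(i, j), rfl⟩)
  · exact Set.mem_insert_of_mem _ (Or.inr ⟨i, rfl⟩)

lemma transversalChoice_mem_swapSignFamily {d : ℕ} (ν : Fin d → ℝ) (i₀ m : Fin d) :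
    transversalChoice ν i₀ m ∈ swapSignFamily d := by
  unfold transversalChoice
  split_ifs with hm hνm
  · exact Or.inl rfl
  · exact Or.inr (Or.inl ⟨i₀, m, Ne.symm hm, rfl⟩)
  · exact Or.inr (Or.inr ⟨m, rfl⟩)

theorem reflections_inversions_transversality_general (d : ℕ) :
    ∃ c : ℝ, 0 < c ∧ ∀ ν : EuclideanSpace ℝ (Fin d), ‖ν‖ = 1 →
      ∃ B : Fin d → Matrix (Fin d) (Fin d) ℝ,
        (∀ m, B m = 1 ∨ (∃ i j : Fin d, i ≠ j ∧ B m = swapMat d i j) ∨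
          (∃ i : Fin d, B m = signMat d i)) ∧
        c ≤ |Matrix.det (Matrix.of fun a m => ((B m).mulVec ν) a)| := by
  have hfin : (Set.univ.pi fun _ : Fin d => swapSignFamily d).Finite :=
    Set.Finite.pi fun _ => swapSignFamily_finite d
  obtain ⟨c, hc, hK⟩ := (isCompact_sphere (0 : EuclideanSpace ℝ (Fin d)) 1).exists_pos_forall_exists_le_norm
    hfin.toFinset
    (fun B ν => (of fun a m => (B m *ᵥ ν) a).det) (fun B _ => by fun_prop) fun ν hν => by
      obtain ⟨i₀, hi₀⟩ : ∃ i₀, ν i₀ ≠ 0 := by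
        by_contra! h
        exact ne_zero_of_mem_unit_sphere ⟨ν, hν⟩ (PiLp.ext h)
      exact ⟨transversalChoice ν i₀, hfin.mem_toFinset.mpr fun m _ =>
        transversalChoice_mem_swapSignFamily _ i₀ m, det_transversalChoice_ne_zero hi₀⟩
  refine ⟨c, hc, fun ν hν => ?_⟩
  obtain ⟨B, hB, hcB⟩ := hK ν (mem_sphere_zero_iff_norm.mpr hν)
  exact ⟨B, fun m => hfin.mem_toFinset.mp hB m (Set.mem_univ m), hcB⟩

/-- The family consisting of the identity, the transpositions `A^{(ij)}` and the
sign flips `A^{(i)}` satisfies the transversality condition: there is `c > 0`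
(depending only on `d`) such that every unit vector `ν ∈ S^{d−1}` admits matrices
`B₁, …, B_d` from the family with `|det(B₁ν, …, B_dν)| ≥ c`. -/
theorem reflections_inversions_transversality (d : ℕ) (hd : 1 ≤ d) :
    ∃ c : ℝ, 0 < c ∧ ∀ ν : EuclideanSpace ℝ (Fin d), ‖ν‖ = 1 →
      ∃ B : Fin d → Matrix (Fin d) (Fin d) ℝ,
        (∀ m, B m = 1 ∨ (∃ i j : Fin d, i ≠ j ∧ B m = swapMat d i j) ∨
          (∃ i : Fin d, B m = signMat d i)) ∧
        c ≤ |Matrix.det (Matrix.of fun a m => ((B m).mulVec ν) a)| :=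
  reflections_inversions_transversality_general d
end

section
/- Let A₁, …, A_l ∈ Sym(ℝ^d), q_i(ξ) = (1/2)⟨ξ, A_i ξ⟩, and fix ξ_τ ∈ ℝ^d and s > 0. Define the generalized Lorentz transformation Λ_{τ,s} : ℝ^d × ℝ^l × ℝ → ℝ^d × ℝ^l × ℝ by Λ_{τ,s}(ξ, ζ, h) = (η, (s^{−2} ζ_i − s^{−1} ⟨η, A_i ξ_τ⟩ − (1/2) h s^{−2} ⟨ξ_τ, A_i ξ_τ⟩)_{i=1,…,l}, h), where η = s^{−1}(ξ − h ξ_τ). Then Λ_{τ,s} maps the cone over the quadratic manifold to itself exactly: for every ξ ∈ ℝ^d and h ≠ 0, Λ_{τ,s}(ξ, (q_1(ξ)/h, …, q_l(ξ)/h), h) = (η, (q_1(η)/h, …, q_l(η)/h), h). Moreover, ‖ξ/h − ξ_τ‖ ≤ s implies ‖η/h‖ ≤ 1. -/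
/-!
Writing `η = s⁻¹ (ξ - h ξ_τ)` and expanding the quadratic form,
`q(η) = s⁻² (q(ξ) - h ⟨ξ, A ξ_τ⟩ + h² q(ξ_τ))`, where the two cross terms merge into one by the
symmetry of `A`. Dividing by `h` and comparing with the `ζ`-component of `Λ` gives the identity;
the sector bound holds because `η / h = s⁻¹ (ξ / h - ξ_τ)`.
-/

open Matrix

theorem Matrix.IsSymm.dotProduct_mulVec_comm {n R : Type*} [Fintype n] [CommSemiring R]
    {A : Matrix n n R} (hA : A.IsSymm) (x y : n → R) : x ⬝ᵥ A *ᵥ y = y ⬝ᵥ A *ᵥ x := by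
  simpa only [hA.eq] using dotProduct_transpose_mulVec A x y

theorem lorentz_quadratic_identity {n K : Type*} [Fintype n] [Field K] [CharZero K]
    {A : Matrix n n K} (hA : A.IsSymm) (x t : n → K) (c h : K) (hh : h ≠ 0) :
    c ^ 2 * (1 / 2 * x ⬝ᵥ A *ᵥ x / h) - c * (c • (x - h • t)) ⬝ᵥ A *ᵥ t
        - 1 / 2 * h * c ^ 2 * t ⬝ᵥ A *ᵥ t
      = 1 / 2 * (c • (x - h • t)) ⬝ᵥ A *ᵥ (c • (x - h • t)) / h := by
  simp only [smul_dotProduct, dotProduct_smul, mulVec_smul, sub_dotProduct, dotProduct_sub,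
    mulVec_sub, smul_eq_mul, hA.dotProduct_mulVec_comm t x]
  field_simp
  ring

theorem norm_inv_smul_le_one {E : Type*} [SeminormedAddCommGroup E] [NormedSpace ℝ E]
    {v : E} {s : ℝ} (hv : ‖v‖ ≤ s) : ‖s⁻¹ • v‖ ≤ 1 := by
  have hs : 0 ≤ s := (norm_nonneg v).trans hv
  rw [norm_smul, norm_inv, Real.norm_of_nonneg hs]
  exact inv_mul_le_one_of_le₀ hv hs

theorem generalized_lorentz_transformation_general
    (d l : ℕ) (A : Fin l → Matrix (Fin d) (Fin d) ℝ) (hA : ∀ i, (A i).IsSymm)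
    (ξτ : EuclideanSpace ℝ (Fin d)) (s : ℝ)
    (q : Fin l → EuclideanSpace ℝ (Fin d) → ℝ)
    (hq : ∀ (i : Fin l) (ξ : EuclideanSpace ℝ (Fin d)),
      q i ξ = (1/2) * dotProduct (ξ : Fin d → ℝ) ((A i).mulVec ξ))
    (Λ : EuclideanSpace ℝ (Fin d) × (Fin l → ℝ) × ℝ →
      EuclideanSpace ℝ (Fin d) × (Fin l → ℝ) × ℝ)
    (hΛ : ∀ (ξ : EuclideanSpace ℝ (Fin d)) (ζ : Fin l → ℝ) (h : ℝ),
      Λ (ξ, ζ, h) = (s⁻¹ • (ξ - h • ξτ),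
        fun i => s⁻¹ ^ 2 * ζ i
          - s⁻¹ * dotProduct ((s⁻¹ • (ξ - h • ξτ) : EuclideanSpace ℝ (Fin d)) : Fin d → ℝ)
              ((A i).mulVec ξτ)
          - (1/2) * h * s⁻¹ ^ 2 * dotProduct (ξτ : Fin d → ℝ) ((A i).mulVec ξτ),
        h)) :
    ∀ (ξ : EuclideanSpace ℝ (Fin d)) (h : ℝ), h ≠ 0 →
      (Λ (ξ, fun i => q i ξ / h, h) =
        (s⁻¹ • (ξ - h • ξτ), fun i => q i (s⁻¹ • (ξ - h • ξτ)) / h, h)) ∧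
      (‖h⁻¹ • ξ - ξτ‖ ≤ s → ‖h⁻¹ • (s⁻¹ • (ξ - h • ξτ) : EuclideanSpace ℝ (Fin d))‖ ≤ 1) := by
  intro ξ h hh
  refine ⟨?_, fun hsector => ?_⟩
  · simp only [hΛ, hq, Prod.mk.injEq, true_and, and_true]
    funext i
    exact lorentz_quadratic_identity (hA i) ξ ξτ s⁻¹ h hh
  · have hrescale : h⁻¹ • s⁻¹ • (ξ - h • ξτ) = s⁻¹ • (h⁻¹ • ξ - ξτ) := by
      rw [smul_comm, smul_sub, smul_smul, inv_mul_cancel₀ hh, one_smul]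
    rw [hrescale]
    exact norm_inv_smul_le_one hsector

/-- **Generalized Lorentz transformation.** With pure quadratic forms
`q_i(ξ) = (1/2)⟨ξ, A_i ξ⟩`, fixed `ξ_τ` and `s > 0`, the map
`Λ_{τ,s}(ξ, ζ, h) = (η, (s⁻²ζ_i − s⁻¹⟨η, A_i ξ_τ⟩ − (1/2) h s⁻²⟨ξ_τ, A_i ξ_τ⟩)_i, h)`
with `η = s⁻¹(ξ − h ξ_τ)` maps the cone over the quadratic manifold to itself:
`Λ_{τ,s}(ξ, (q_i(ξ)/h)_i, h) = (η, (q_i(η)/h)_i, h)` for `h ≠ 0`. Moreover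
`‖ξ/h − ξ_τ‖ ≤ s` implies `‖η/h‖ ≤ 1`. -/
theorem generalized_lorentz_transformation
    (d l : ℕ) (A : Fin l → Matrix (Fin d) (Fin d) ℝ) (hA : ∀ i, (A i).IsSymm)
    (ξτ : EuclideanSpace ℝ (Fin d)) (s : ℝ) (hs : 0 < s)
    (q : Fin l → EuclideanSpace ℝ (Fin d) → ℝ)
    (hq : ∀ (i : Fin l) (ξ : EuclideanSpace ℝ (Fin d)),
      q i ξ = (1/2) * dotProduct (ξ : Fin d → ℝ) ((A i).mulVec ξ))
    (Λ : EuclideanSpace ℝ (Fin d) × (Fin l → ℝ) × ℝ →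
      EuclideanSpace ℝ (Fin d) × (Fin l → ℝ) × ℝ)
    (hΛ : ∀ (ξ : EuclideanSpace ℝ (Fin d)) (ζ : Fin l → ℝ) (h : ℝ),
      Λ (ξ, ζ, h) = (s⁻¹ • (ξ - h • ξτ),
        fun i => s⁻¹ ^ 2 * ζ i
          - s⁻¹ * dotProduct ((s⁻¹ • (ξ - h • ξτ) : EuclideanSpace ℝ (Fin d)) : Fin d → ℝ)
              ((A i).mulVec ξτ)
          - (1/2) * h * s⁻¹ ^ 2 * dotProduct (ξτ : Fin d → ℝ) ((A i).mulVec ξτ),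
        h)) :
    ∀ (ξ : EuclideanSpace ℝ (Fin d)) (h : ℝ), h ≠ 0 →
      (Λ (ξ, fun i => q i ξ / h, h) =
        (s⁻¹ • (ξ - h • ξτ), fun i => q i (s⁻¹ • (ξ - h • ξτ)) / h, h)) ∧
      (‖h⁻¹ • ξ - ξτ‖ ≤ s → ‖h⁻¹ • (s⁻¹ • (ξ - h • ξτ) : EuclideanSpace ℝ (Fin d))‖ ≤ 1) :=
  generalized_lorentz_transformation_general d l A hA ξτ s q hq Λ hΛ
end
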